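/- For all g, h ∈ SL₂(ℝ), the quantity ω(g,h) defined via the principal logarithm of automorphy factors takes only the values −1, 0, or 1. -/

import Mathlib

open Matrix UpperHalfPlane Complex

abbrev SL2R := Matrix.SpecialLinearGroup (Fin 2) ℝ

/-- The automorphy factor `j(g,z) = cz + d`. -/
noncomputable def jFac (g : SL2R) (z : ℂ) : ℂ :=
  (g.1 1 0 : ℝ) * z + (g.1 1 1 : ℝ)

/-- Petersson's 2-cocycle
`ω(g,h) = (1/(2πi))(Log j(g, h·z) + Log j(h,z) − Log j(gh,z))`. -/
noncomputable def omegaC (g h : SL2R) (z : ℍ) : ℂ :=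
  (1 / (2 * Real.pi * Complex.I)) *
    (Complex.log (jFac g ((h • z : ℍ) : ℂ)) + Complex.log (jFac h (z : ℂ))
      - Complex.log (jFac (g * h) (z : ℂ)))

/-! By the cocycle relation `j(gh, z) = j(g, h • z) j(h, z)`, `2πi ω(g, h)` equals
`Log a + Log b - Log (a b)` for the nonzero numbers `a = j(g, h • z)`, `b = j(h, z)`. Its
exponential is `1`, so it is `2πi k` for an integer `k`; its imaginary part
`arg a + arg b - arg (a b)` lies in `(-3π, 3π)` because `arg` takes values in `(-π, π]`,
which forces `|k| ≤ 1`. -/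

open Real

lemma jFac_eq_denom (g : SL2R) (z : ℂ) : jFac g z = denom (SpecialLinearGroup.mapGL ℝ g) z := by
  simp [jFac, denom]

lemma jFac_ne_zero (g : SL2R) (z : ℍ) : jFac g z ≠ 0 := by
  rw [jFac_eq_denom]
  exact denom_ne_zero _ z

lemma jFac_mul (g h : SL2R) (z : ℍ) :
    jFac (g * h) z = jFac g ((h • z : ℍ) : ℂ) * jFac h z := by
  have hz := jFac_ne_zero h z
  rw [coe_specialLinearGroup_apply]
  simp only [jFac, Algebra.algebraMap_self, RingHom.id_apply] at hz ⊢
  have hmul : (g * h).1 = g.1 * h.1 := rfl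
  rw [add_mul, mul_assoc, div_mul_cancel₀ _ hz]
  simp only [hmul, mul_apply, Fin.sum_univ_two]
  push_cast
  ring

namespace Complex

lemma exists_int_log_add_log_sub_log_mul {a b : ℂ} (ha : a ≠ 0) (hb : b ≠ 0) :
    ∃ k : ℤ, log a + log b - log (a * b) = k * (2 * π * I) := by
  have : exp (log a + log b - log (a * b)) = exp 0 := by
    rw [exp_sub, exp_add, exp_log ha, exp_log hb, exp_log (mul_ne_zero ha hb), div_self
      (mul_ne_zero ha hb), exp_zero]
  simpa using exp_eq_exp_iff_exists_int.mp this

lemma abs_im_log_add_log_sub_log_mul_lt (a b : ℂ) :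
    |(log a + log b - log (a * b)).im| < 3 * π := by
  simp only [sub_im, add_im, log_im, abs_lt]
  constructor <;> linarith [neg_pi_lt_arg a, arg_le_pi a, neg_pi_lt_arg b, arg_le_pi b,
    neg_pi_lt_arg (a * b), arg_le_pi (a * b)]

lemma exists_int_abs_le_one_log_add_log_sub_log_mul {a b : ℂ} (ha : a ≠ 0) (hb : b ≠ 0) :
    ∃ k : ℤ, |k| ≤ 1 ∧ log a + log b - log (a * b) = k * (2 * π * I) := by
  obtain ⟨k, hk⟩ := exists_int_log_add_log_sub_log_mul ha hb
  refine ⟨k, ?_, hk⟩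
  have hbound := abs_im_log_add_log_sub_log_mul_lt a b
  have him : (log a + log b - log (a * b)).im = k * (2 * π) := by
    simp [hk]
  rw [him, abs_lt] at hbound
  have hlt : (k : ℝ) < 2 := by nlinarith [pi_pos]
  have hgt : (-2 : ℝ) < k := by nlinarith [pi_pos]
  have : -2 < k ∧ k < 2 := ⟨by exact_mod_cast hgt, by exact_mod_cast hlt⟩
  rw [abs_le]
  omega

end Complex

lemma exists_int_abs_le_one_omegaC_eq (g h : SL2R) (z : ℍ) :
    ∃ k : ℤ, |k| ≤ 1 ∧ omegaC g h z = k := by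
  obtain ⟨k, hk, hlog⟩ := Complex.exists_int_abs_le_one_log_add_log_sub_log_mul
    (jFac_ne_zero g (h • z)) (jFac_ne_zero h z)
  refine ⟨k, hk, ?_⟩
  rw [omegaC, jFac_mul, hlog]
  field_simp

/-- `ω(g,h)` takes only the values `−1, 0, 1`. -/
theorem omegaC_mem (g h : SL2R) (z : ℍ) :
    omegaC g h z = -1 ∨ omegaC g h z = 0 ∨ omegaC g h z = 1 := by
  obtain ⟨k, hk, hω⟩ := exists_int_abs_le_one_omegaC_eq g h z
  obtain rfl | rfl | rfl : k = -1 ∨ k = 0 ∨ k = 1 := by rw [abs_le] at hk; omega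
  all_goals simp [hω]
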